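/- Grothendieck's inequality: there exists a universal constant K such that for every n, every real matrix (a_{ij}) satisfying |Σ a_{ij} s_i t_j| ≤ 1 for all choices of signs s_i, t_j ∈ {-1,1}, and every family of unit vectors x_i, y_j in a real inner product space, one has |Σ a_{ij} ⟨x_i, y_j⟩| ≤ K. -/

import Mathlib

/-!
Let `grothendieckConst n m` be the best constant for `n × m` matrices and vectors in
finite-dimensional Euclidean spaces; it is finite (at most `n * m`) because every `|a i j| ≤ 1`.
Represent a vector `x` of norm at most `1` by its Rademacher sum `φ = ∑ k, x k * ε k` on the
discrete cube, so that `⟪x, y⟫ = 𝔼 φ ψ` and, by Khintchine, `𝔼 φ ^ 4 ≤ 3`. Clamping `φ` and `ψ` at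
level `7` splits `⟪x, y⟫` into a part with bounded integrands, where the sign condition applies
pointwise and gives at most `49`, and two terms pairing a function of `L²`-norm at most `1 / 4`
with one of norm at most `1`. These are again Grothendieck sums, each bounded by a quarter of the
constant, so the constant is at most `49 + grothendieckConst n m / 2`, hence at most `98`.
A general inner product space reduces to a Euclidean one: finitely many vectors span a
finite-dimensional subspace.
-/

open Finset RealInnerProductSpace
open scoped BigOperators

section SignBounded

variable {ι κ : Type*} [Fintype ι] [Fintype κ]

def SignBounded (a : ι → κ → ℝ) : Prop :=
  ∀ (s : ι → ℝ) (t : κ → ℝ), (∀ i, s i = 1 ∨ s i = -1) → (∀ j, t j = 1 ∨ t j = -1) →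
    |∑ i, ∑ j, a i j * s i * t j| ≤ 1

lemma abs_sum_mul_le_of_forall_signs {c : ι → ℝ} {B : ℝ}
    (h : ∀ σ : ι → ℝ, (∀ i, σ i = 1 ∨ σ i = -1) → |∑ i, σ i * c i| ≤ B)
    {s : ι → ℝ} (hs : ∀ i, |s i| ≤ 1) : |∑ i, s i * c i| ≤ B := by
  let σ : ι → ℝ := fun i => if 0 ≤ c i then 1 else -1
  have hσ : ∀ i, σ i * c i = |c i| := fun i => by
    by_cases hc : 0 ≤ c i
    · simp [σ, hc, abs_of_nonneg hc]
    · simp [σ, hc, abs_of_neg (not_le.mp hc)]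
  calc |∑ i, s i * c i| ≤ ∑ i, |s i * c i| := abs_sum_le_sum_abs _ _
    _ ≤ ∑ i, |c i| := sum_le_sum fun i _ => by
        rw [abs_mul]; exact mul_le_of_le_one_left (abs_nonneg _) (hs i)
    _ = ∑ i, σ i * c i := by simp only [hσ]
    _ ≤ |∑ i, σ i * c i| := le_abs_self _
    _ ≤ B := h σ fun i => by by_cases hc : 0 ≤ c i <;> simp [σ, hc]

variable {a : ι → κ → ℝ}

lemma SignBounded.abs_sum_le (ha : SignBounded a) {s : ι → ℝ} {t : κ → ℝ}
    (hs : ∀ i, |s i| ≤ 1) (ht : ∀ j, |t j| ≤ 1) : |∑ i, ∑ j, a i j * s i * t j| ≤ 1 := by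
  have row : ∀ (s : ι → ℝ) (t : κ → ℝ),
      ∑ i, ∑ j, a i j * s i * t j = ∑ i, s i * ∑ j, a i j * t j := fun s t =>
    sum_congr rfl fun i _ => by rw [mul_sum]; exact sum_congr rfl fun j _ => by ring
  have col : ∀ (s : ι → ℝ) (t : κ → ℝ),
      ∑ i, ∑ j, a i j * s i * t j = ∑ j, t j * ∑ i, a i j * s i := fun s t => by
    rw [sum_comm]
    exact sum_congr rfl fun j _ => by rw [mul_sum]; exact sum_congr rfl fun i _ => by ring
  rw [row]
  refine abs_sum_mul_le_of_forall_signs (fun σ hσ => ?_) hs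
  rw [← row, col]
  exact abs_sum_mul_le_of_forall_signs (fun τ hτ => by rw [← col]; exact ha σ τ hσ hτ) ht

lemma SignBounded.abs_sum_le_mul (ha : SignBounded a) {s : ι → ℝ} {t : κ → ℝ} {l u : ℝ}
    (hl : 0 < l) (hu : 0 < u) (hs : ∀ i, |s i| ≤ l) (ht : ∀ j, |t j| ≤ u) :
    |∑ i, ∑ j, a i j * s i * t j| ≤ l * u := by
  have h := ha.abs_sum_le (s := fun i => s i / l) (t := fun j => t j / u)
    (fun i => by rw [abs_div, abs_of_pos hl, div_le_one hl]; exact hs i)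
    (fun j => by rw [abs_div, abs_of_pos hu, div_le_one hu]; exact ht j)
  have e : ∑ i, ∑ j, a i j * (s i / l) * (t j / u) = (∑ i, ∑ j, a i j * s i * t j) / (l * u) := by
    simp only [sum_div]
    exact sum_congr rfl fun i _ => sum_congr rfl fun j _ => by field_simp
  rwa [e, abs_div, abs_of_pos (mul_pos hl hu), div_le_one (mul_pos hl hu)] at h

lemma SignBounded.abs_le_one (ha : SignBounded a) (i : ι) (j : κ) : |a i j| ≤ 1 := by
  classical
  have h := ha.abs_sum_le (s := Pi.single i 1) (t := Pi.single j 1)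
    (fun i' => by by_cases h : i' = i <;> simp [h])
    (fun j' => by by_cases h : j' = j <;> simp [h])
  simpa [Pi.single_apply] using h

lemma SignBounded.abs_sum_expect_le (ha : SignBounded a) {Ω : Type*} [Fintype Ω] [Nonempty Ω]
    {A : ι → Ω → ℝ} {B : κ → Ω → ℝ} {l u : ℝ} (hl : 0 < l) (hu : 0 < u)
    (hA : ∀ i ω, |A i ω| ≤ l) (hB : ∀ j ω, |B j ω| ≤ u) :
    |∑ i, ∑ j, a i j * 𝔼 ω, A i ω * B j ω| ≤ l * u := by
  have e : ∑ i, ∑ j, a i j * 𝔼 ω, A i ω * B j ω = 𝔼 ω, ∑ i, ∑ j, a i j * A i ω * B j ω := by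
    simp only [mul_expect, mul_assoc, expect_sum_comm]
  rw [e]
  exact (abs_expect_le _ _).trans <| expect_le univ_nonempty fun ω _ =>
    ha.abs_sum_le_mul hl hu (fun i => hA i ω) (fun j => hB j ω)

end SignBounded

section Rademacher

def boolSign (b : Bool) : ℝ := if b then 1 else -1

def rademacherSum {d : ℕ} (x : Fin d → ℝ) (ω : Fin d → Bool) : ℝ := ∑ k, x k * boolSign (ω k)

lemma expect_bool (g : Bool → ℝ) : 𝔼 b, g b = (g true + g false) / 2 := by
  rw [Fintype.expect_eq_sum_div_card, Fintype.sum_bool]; norm_num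

lemma expect_cube_succ {d : ℕ} (f : (Fin (d + 1) → Bool) → ℝ) :
    𝔼 ω, f ω = 𝔼 ω : Fin d → Bool, 𝔼 b : Bool, f (Fin.cons b ω) := by
  rw [Fintype.expect_equiv (Fin.consEquiv fun _ => Bool).symm f (fun p => f (Fin.cons p.1 p.2))
    (fun ω => by simp), ← univ_product_univ, expect_product, expect_comm]

lemma rademacherSum_cons {d : ℕ} (x : Fin (d + 1) → ℝ) (b : Bool) (ω : Fin d → Bool) :
    rademacherSum x (Fin.cons b ω) = x 0 * boolSign b + rademacherSum (Fin.tail x) ω := by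
  simp [rademacherSum, Fin.sum_univ_succ, Fin.tail]

lemma expect_rademacherSum_mul {d : ℕ} (x y : Fin d → ℝ) :
    𝔼 ω, rademacherSum x ω * rademacherSum y ω = ∑ k, x k * y k := by
  induction d with
  | zero => simp [rademacherSum]
  | succ d ih =>
    simp only [expect_cube_succ, rademacherSum_cons, expect_bool, boolSign, if_true,
      Bool.false_eq_true, if_false]
    have e : ∀ R S : ℝ, ((x 0 * 1 + R) * (y 0 * 1 + S) + (x 0 * -1 + R) * (y 0 * -1 + S)) / 2
        = x 0 * y 0 + R * S := fun R S => by ring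
    simp only [e, expect_add_distrib, Fintype.expect_const, ih, Fin.sum_univ_succ, Fin.tail]

lemma expect_rademacherSum_sq {d : ℕ} (x : Fin d → ℝ) :
    𝔼 ω, rademacherSum x ω ^ 2 = ∑ k, x k ^ 2 := by
  simpa only [← sq] using expect_rademacherSum_mul x x

/-- Khintchine's inequality for the fourth moment. -/
lemma expect_rademacherSum_pow_four_le {d : ℕ} (x : Fin d → ℝ) :
    𝔼 ω, rademacherSum x ω ^ 4 ≤ 3 * (∑ k, x k ^ 2) ^ 2 := by
  induction d with
  | zero => simp [rademacherSum]
  | succ d ih =>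
    simp only [expect_cube_succ, rademacherSum_cons, expect_bool, boolSign, if_true,
      Bool.false_eq_true, if_false]
    have e : ∀ R : ℝ, ((x 0 * 1 + R) ^ 4 + (x 0 * -1 + R) ^ 4) / 2
        = x 0 ^ 4 + 6 * x 0 ^ 2 * R ^ 2 + R ^ 4 := fun R => by ring
    simp only [e, expect_add_distrib, Fintype.expect_const, ← mul_expect, expect_rademacherSum_sq,
      Fin.sum_univ_succ]
    have h4 := ih (Fin.tail x)
    have hS : 0 ≤ ∑ k, Fin.tail x k ^ 2 := sum_nonneg fun k _ => sq_nonneg _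
    simp only [Fin.tail] at h4 hS ⊢
    nlinarith [sq_nonneg (x 0), mul_nonneg (sq_nonneg (x 0)) hS]

end Rademacher

section Clamp

def clamp (M c : ℝ) : ℝ := max (-M) (min M c)

variable {M : ℝ}

lemma abs_clamp_le (hM : 0 ≤ M) (c : ℝ) : |clamp M c| ≤ M :=
  abs_le.2 ⟨le_max_left _ _, max_le (by linarith) (min_le_left _ _)⟩

lemma clamp_eq_of_abs_le {c : ℝ} (hc : |c| ≤ M) : clamp M c = c := by
  rw [abs_le] at hc
  rw [clamp, min_eq_right hc.2, max_eq_right hc.1]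

lemma abs_clamp_le_abs (hM : 0 ≤ M) (c : ℝ) : |clamp M c| ≤ |c| := by
  rcases le_or_gt |c| M with hc | hc
  · rw [clamp_eq_of_abs_le hc]
  · exact (abs_clamp_le hM c).trans hc.le

lemma abs_sub_clamp_le (hM : 0 ≤ M) (c : ℝ) : |c - clamp M c| ≤ |c| := by
  unfold clamp
  rcases le_total c (-M) with h | h <;> rcases le_total M c with h' | h' <;>
    simp only [abs_le, max_def, min_def] <;> split_ifs <;> constructor <;>
    linarith [le_abs_self c, neg_abs_le c]

lemma sq_sub_clamp_le (hM : 0 < M) (c : ℝ) : (c - clamp M c) ^ 2 ≤ c ^ 4 / M ^ 2 := by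
  rcases le_or_gt |c| M with hc | hc
  · rw [clamp_eq_of_abs_le hc, sub_self, zero_pow two_ne_zero]; positivity
  · have hMc : M ^ 2 ≤ c ^ 2 := sq_le_sq.2 (by rw [abs_of_pos hM]; exact hc.le)
    rw [le_div_iff₀ (by positivity)]
    calc (c - clamp M c) ^ 2 * M ^ 2 ≤ c ^ 2 * c ^ 2 :=
          mul_le_mul (sq_le_sq.2 (by simpa using abs_sub_clamp_le hM.le c)) hMc
            (by positivity) (sq_nonneg c)
      _ = c ^ 4 := by ring

end Clamp

lemma expect_sq_sub_clamp_rademacherSum_le {d : ℕ} {x : Fin d → ℝ} (hx : ∑ k, x k ^ 2 ≤ 1)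
    {M : ℝ} (hM : 0 < M) :
    𝔼 ω, (rademacherSum x ω - clamp M (rademacherSum x ω)) ^ 2 ≤ 3 / M ^ 2 := by
  have h4 : 𝔼 ω, rademacherSum x ω ^ 4 ≤ 3 := by
    have hS : 0 ≤ ∑ k, x k ^ 2 := sum_nonneg fun k _ => sq_nonneg _
    nlinarith [expect_rademacherSum_pow_four_le x]
  calc 𝔼 ω, (rademacherSum x ω - clamp M (rademacherSum x ω)) ^ 2
      ≤ 𝔼 ω, rademacherSum x ω ^ 4 / M ^ 2 := expect_le_expect fun ω _ => sq_sub_clamp_le hM _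
    _ ≤ 3 / M ^ 2 := by rw [← expect_div]; gcongr

lemma exists_euclidean_inner_eq {ι E : Type*} [Finite ι] [NormedAddCommGroup E]
    [InnerProductSpace ℝ E] (z : ι → E) :
    ∃ (d : ℕ) (z' : ι → EuclideanSpace ℝ (Fin d)), ∀ i j, ⟪z' i, z' j⟫ = ⟪z i, z j⟫ := by
  let F := Submodule.span ℝ (Set.range z)
  have : FiniteDimensional ℝ F := FiniteDimensional.span_of_finite ℝ (Set.finite_range z)
  let b := stdOrthonormalBasis ℝ F
  exact ⟨_, fun i => b.repr ⟨z i, Submodule.subset_span ⟨i, rfl⟩⟩,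
    fun i j => b.repr.inner_map_map _ _⟩

section UniformL2

variable {Ω : Type*} [Fintype Ω]

noncomputable def toUniformL2 (f : Ω → ℝ) : EuclideanSpace ℝ Ω :=
  (√(Fintype.card Ω))⁻¹ • WithLp.toLp 2 f

lemma inner_toUniformL2 (f g : Ω → ℝ) :
    ⟪toUniformL2 f, toUniformL2 g⟫ = 𝔼 ω, f ω * g ω := by
  rw [toUniformL2, toUniformL2, real_inner_smul_left, real_inner_smul_right,
    EuclideanSpace.inner_toLp_toLp, Fintype.expect_eq_sum_div_card, ← mul_assoc, ← mul_inv,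
    Real.mul_self_sqrt (Nat.cast_nonneg _), dotProduct, div_eq_inv_mul]
  simp [mul_comm]

lemma norm_toUniformL2_le {f : Ω → ℝ} {c : ℝ} (hc : 0 ≤ c) (hf : 𝔼 ω, f ω ^ 2 ≤ c ^ 2) :
    ‖toUniformL2 f‖ ≤ c := by
  refine le_of_sq_le_sq ?_ hc
  rw [← real_inner_self_eq_norm_sq, inner_toUniformL2]
  simpa [sq] using hf

end UniformL2

section GrothendieckConstant

def grothendieckValues (n m : ℕ) : Set ℝ :=
  {v | ∃ (d : ℕ) (a : Fin n → Fin m → ℝ) (x : Fin n → EuclideanSpace ℝ (Fin d))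
      (y : Fin m → EuclideanSpace ℝ (Fin d)), SignBounded a ∧ (∀ i, ‖x i‖ ≤ 1) ∧
      (∀ j, ‖y j‖ ≤ 1) ∧ v = |∑ i, ∑ j, a i j * ⟪x i, y j⟫|}

noncomputable def grothendieckConst (n m : ℕ) : ℝ := sSup (grothendieckValues n m)

variable {n m : ℕ}

lemma bddAbove_grothendieckValues : BddAbove (grothendieckValues n m) := by
  refine ⟨n * m, ?_⟩
  rintro _ ⟨d, a, x, y, ha, hx, hy, rfl⟩
  have hterm : ∀ i j, |a i j * ⟪x i, y j⟫| ≤ 1 := fun i j => by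
    rw [abs_mul]
    exact mul_le_one₀ (ha.abs_le_one i j) (abs_nonneg _)
      ((abs_real_inner_le_norm _ _).trans (mul_le_one₀ (hx i) (norm_nonneg _) (hy j)))
  calc |∑ i, ∑ j, a i j * ⟪x i, y j⟫| ≤ ∑ i, ∑ j, |a i j * ⟪x i, y j⟫| :=
        (abs_sum_le_sum_abs _ _).trans (sum_le_sum fun i _ => abs_sum_le_sum_abs _ _)
    _ ≤ ∑ i : Fin n, ∑ j : Fin m, (1 : ℝ) :=
        sum_le_sum fun i _ => sum_le_sum fun j _ => hterm i j
    _ = n * m := by simp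

lemma grothendieckConst_nonneg : 0 ≤ grothendieckConst n m :=
  Real.sSup_nonneg fun _ ⟨_, _, _, _, _, _, _, hv⟩ => hv ▸ abs_nonneg _

variable {a : Fin n → Fin m → ℝ}

lemma SignBounded.abs_sum_inner_le {E : Type*} [NormedAddCommGroup E] [InnerProductSpace ℝ E]
    (ha : SignBounded a) {x : Fin n → E} {y : Fin m → E} {c₁ c₂ : ℝ}
    (hc₁ : 0 < c₁) (hc₂ : 0 < c₂) (hx : ∀ i, ‖x i‖ ≤ c₁) (hy : ∀ j, ‖y j‖ ≤ c₂) :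
    |∑ i, ∑ j, a i j * ⟪x i, y j⟫| ≤ c₁ * c₂ * grothendieckConst n m := by
  obtain ⟨d, z, hz⟩ := exists_euclidean_inner_eq (Sum.elim (c₁⁻¹ • x) (c₂⁻¹ • y))
  have hnorm : ∀ k, ‖z k‖ ≤ 1 := fun k => by
    rw [norm_eq_sqrt_real_inner, hz, ← norm_eq_sqrt_real_inner]
    rcases k with i | j <;> simp only [Sum.elim_inl, Sum.elim_inr, Pi.smul_apply, norm_smul,
      norm_inv, Real.norm_of_nonneg hc₁.le, Real.norm_of_nonneg hc₂.le]
    exacts [inv_mul_le_one_of_le₀ (hx i) hc₁.le, inv_mul_le_one_of_le₀ (hy j) hc₂.le]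
  have hmem : |∑ i, ∑ j, a i j * ⟪z (.inl i), z (.inr j)⟫| ∈ grothendieckValues n m :=
    ⟨d, a, _, _, ha, fun i => hnorm _, fun j => hnorm _, rfl⟩
  have e : ∑ i, ∑ j, a i j * ⟪x i, y j⟫
      = c₁ * c₂ * ∑ i, ∑ j, a i j * ⟪z (.inl i), z (.inr j)⟫ := by
    simp only [hz, Sum.elim_inl, Sum.elim_inr, Pi.smul_apply, real_inner_smul_left,
      real_inner_smul_right, mul_sum]
    exact sum_congr rfl fun i _ => sum_congr rfl fun j _ => by field_simp
  rw [e, abs_mul, abs_of_pos (mul_pos hc₁ hc₂)]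
  exact mul_le_mul_of_nonneg_left (le_csSup bddAbove_grothendieckValues hmem) (by positivity)

lemma SignBounded.abs_sum_expect_le_of_sq {Ω : Type*} [Fintype Ω] (ha : SignBounded a)
    {A : Fin n → Ω → ℝ} {B : Fin m → Ω → ℝ} {c₁ c₂ : ℝ} (hc₁ : 0 < c₁) (hc₂ : 0 < c₂)
    (hA : ∀ i, 𝔼 ω, A i ω ^ 2 ≤ c₁ ^ 2) (hB : ∀ j, 𝔼 ω, B j ω ^ 2 ≤ c₂ ^ 2) :
    |∑ i, ∑ j, a i j * 𝔼 ω, A i ω * B j ω| ≤ c₁ * c₂ * grothendieckConst n m := by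
  simpa only [inner_toUniformL2] using ha.abs_sum_inner_le hc₁ hc₂
    (fun i => norm_toUniformL2_le hc₁.le (hA i)) (fun j => norm_toUniformL2_le hc₂.le (hB j))

lemma le_add_grothendieckConst_div_two_of_mem {v : ℝ} (hv : v ∈ grothendieckValues n m) :
    v ≤ 49 + grothendieckConst n m / 2 := by
  obtain ⟨d, a, x, y, ha, hx, hy, rfl⟩ := hv
  have hunit : ∀ z : EuclideanSpace ℝ (Fin d), ‖z‖ ≤ 1 → ∑ k, z k ^ 2 ≤ 1 := fun z hz => by
    rw [← EuclideanSpace.real_norm_sq_eq]; exact pow_le_one₀ (norm_nonneg _) hz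
  set φ : Fin n → (Fin d → Bool) → ℝ := fun i => rademacherSum ⇑(x i)
  set ψ : Fin m → (Fin d → Bool) → ℝ := fun j => rademacherSum ⇑(y j)
  set T₁ := ∑ i, ∑ j, a i j * 𝔼 ω, clamp 7 (φ i ω) * clamp 7 (ψ j ω)
  set T₂ := ∑ i, ∑ j, a i j * 𝔼 ω, (φ i ω - clamp 7 (φ i ω)) * ψ j ω
  set T₃ := ∑ i, ∑ j, a i j * 𝔼 ω, clamp 7 (φ i ω) * (ψ j ω - clamp 7 (ψ j ω))
  have hinner : ∀ i j, ⟪x i, y j⟫ = 𝔼 ω, φ i ω * ψ j ω := fun i j => by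
    simp only [φ, ψ, expect_rademacherSum_mul, PiLp.inner_apply, RCLike.inner_apply, conj_trivial,
      mul_comm]
  have hsplit : ∑ i, ∑ j, a i j * ⟪x i, y j⟫ = T₁ + T₂ + T₃ := by
    simp only [T₁, T₂, T₃, hinner, ← sum_add_distrib, ← mul_add, ← expect_add_distrib]
    exact sum_congr rfl fun i _ => sum_congr rfl fun j _ => congrArg (a i j * ·) <|
      expect_congr rfl fun ω _ => by ring
  have hT₁ : |T₁| ≤ 7 * 7 :=
    ha.abs_sum_expect_le (by norm_num) (by norm_num) (fun i ω => abs_clamp_le (by norm_num) _)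
      (fun j ω => abs_clamp_le (by norm_num) _)
  have htail : ∀ z : EuclideanSpace ℝ (Fin d), ‖z‖ ≤ 1 →
      𝔼 ω, (rademacherSum z ω - clamp 7 (rademacherSum z ω)) ^ 2 ≤ (1 / 4) ^ 2 := fun z hz =>
    (expect_sq_sub_clamp_rademacherSum_le (hunit z hz) (by norm_num)).trans (by norm_num)
  have hsq : ∀ z : EuclideanSpace ℝ (Fin d), ‖z‖ ≤ 1 → 𝔼 ω, rademacherSum z ω ^ 2 ≤ 1 ^ 2 :=
    fun z hz => by rw [expect_rademacherSum_sq, one_pow]; exact hunit z hz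
  have hT₂ : |T₂| ≤ 1 / 4 * 1 * grothendieckConst n m :=
    ha.abs_sum_expect_le_of_sq (by norm_num) one_pos (fun i => htail _ (hx i))
      (fun j => hsq _ (hy j))
  have hT₃ : |T₃| ≤ 1 * (1 / 4) * grothendieckConst n m :=
    ha.abs_sum_expect_le_of_sq one_pos (by norm_num)
      (fun i => (expect_le_expect fun ω _ => sq_le_sq.2 (by
        simpa only [abs_abs] using abs_clamp_le_abs (by norm_num) _)).trans (hsq _ (hx i)))
      (fun j => htail _ (hy j))
  rw [hsplit]
  linarith [abs_add_three T₁ T₂ T₃]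

lemma grothendieckConst_le (n m : ℕ) : grothendieckConst n m ≤ 98 := by
  have : grothendieckConst n m ≤ 49 + grothendieckConst n m / 2 :=
    Real.sSup_le (fun _ => le_add_grothendieckConst_div_two_of_mem)
      (by linarith [grothendieckConst_nonneg (n := n) (m := m)])
  linarith

end GrothendieckConstant

theorem stmt_15 :
    ∃ K : ℝ, ∀ (H : Type) (_ : NormedAddCommGroup H) (_ : InnerProductSpace ℝ H)
      (n m : ℕ) (a : Fin n → Fin m → ℝ),
      (∀ (s : Fin n → ℝ) (t : Fin m → ℝ), (∀ i, s i = 1 ∨ s i = -1) →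
        (∀ j, t j = 1 ∨ t j = -1) →
        |∑ i, ∑ j, a i j * s i * t j| ≤ 1) →
      ∀ (x : Fin n → H) (y : Fin m → H), (∀ i, ‖x i‖ = 1) → (∀ j, ‖y j‖ = 1) →
        |∑ i, ∑ j, a i j * ⟪x i, y j⟫| ≤ K := by
  refine ⟨98, fun H _ _ n m a ha x y hx hy => ?_⟩
  calc |∑ i, ∑ j, a i j * ⟪x i, y j⟫| ≤ 1 * 1 * grothendieckConst n m :=
        SignBounded.abs_sum_inner_le ha one_pos one_pos (fun i => (hx i).le) (fun j => (hy j).le)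
    _ ≤ 98 := by linarith [grothendieckConst_le n m]
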